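/- arXiv:1503.06155 — 2 statements merged into one kernel-verified Lean document; each statement's English description precedes it below -/
import Mathlib

section
/- Let r > 1 and δ > 0 be real numbers, and define κ(r, δ) = (r(1+δ))^{1/r} - 1 and δ(r) = r^{1/(r-1)} - 1. Then κ(r, δ) < δ if and only if δ > δ(r). Consequently, the interval (κ(r, δ), δ] is nonempty if and only if δ > δ(r). -/
/-- Raising to the powers `r` and `r - 1`, both sides say `r * x < x ^ r`. -/
theorem Real.rpow_one_div_mul_lt_self_iff {r x : ℝ} (hr : 1 < r) (hx : 0 < x) :
    (r * x) ^ (1 / r) < x ↔ r ^ (1 / (r - 1)) < x := by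
  have hr0 : 0 < r := by linarith
  rw [one_div, one_div, Real.rpow_inv_lt_iff_of_pos (by positivity) hx.le hr0,
    Real.rpow_inv_lt_iff_of_pos hr0.le hx.le (by linarith)]
  have hsplit : x ^ r = x ^ (r - 1) * x := by
    rw [← Real.rpow_add_one hx.ne']
    ring_nf
  rw [hsplit, mul_lt_mul_iff_left₀ hx]

theorem stmt_5 (r δ : ℝ) (hr : r > 1) (hδ : δ > 0) :
    ((r * (1 + δ)) ^ (1 / r) - 1 < δ ↔ δ > r ^ (1 / (r - 1)) - 1) ∧
    ((Set.Ioc ((r * (1 + δ)) ^ (1 / r) - 1) δ).Nonempty ↔ δ > r ^ (1 / (r - 1)) - 1) := by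
  have key : (r * (1 + δ)) ^ (1 / r) - 1 < δ ↔ δ > r ^ (1 / (r - 1)) - 1 := by
    rw [sub_lt_iff_lt_add', gt_iff_lt, sub_lt_iff_lt_add',
      Real.rpow_one_div_mul_lt_self_iff hr (by linarith)]
  exact ⟨key, Set.nonempty_Ioc.trans key⟩
end

section
/- Let r > 1 and δ > 0 be reals and suppose (1/r)^{1/r} (1 + t) (1 + δ)^{-1/r} > 1 for some t ∈ (0, δ]. Then necessarily δ > r^{1/(r-1)} - 1. Conversely, if δ > r^{1/(r-1)} - 1, then there exists t ∈ (0, δ] with (1/r)^{1/r}(1+t)(1+δ)^{-1/r} > 1, namely any t ∈ ((r(1+δ))^{1/r} - 1, δ]. -/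
/-!
With `A = (r(1+δ))^{1/r}`, the quantity `(1/r)^{1/r}(1+t)(1+δ)^{-1/r}` equals `(1+t)/A`, so it
exceeds `1` exactly when `t > A - 1`. Such a `t ≤ δ` exists iff `A < 1+δ`, i.e. iff
`r(1+δ) < (1+δ)^r`, i.e. iff `r < (1+δ)^{r-1}`, i.e. iff `r^{1/(r-1)} < 1+δ`.
-/

open Real

lemma one_div_rpow_mul_mul_rpow_neg {r x : ℝ} (hr : 0 ≤ r) (hx : 0 ≤ x) (y : ℝ) :
    (1 / r) ^ (1 / r) * y * x ^ (-(1 / r)) = y / (r * x) ^ (1 / r) := by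
  rw [one_div r, inv_rpow hr, rpow_neg hx, ← one_div r, mul_rpow hr hx]
  ring

lemma mul_lt_rpow_iff_lt_rpow_sub_one {r x : ℝ} (hx : 0 < x) :
    r * x < x ^ r ↔ r < x ^ (r - 1) := by
  rw [rpow_sub_one hx.ne', lt_div_iff₀ hx]

lemma rpow_one_div_sub_one_lt_iff {r x : ℝ} (hr : 1 < r) (hx : 0 < x) :
    r ^ (1 / (r - 1)) < x ↔ (r * x) ^ (1 / r) < x := by
  have hr₀ : 0 < r := one_pos.trans hr
  rw [one_div, one_div, rpow_inv_lt_iff_of_pos hr₀.le hx.le (sub_pos.2 hr),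
    rpow_inv_lt_iff_of_pos (by positivity) hx.le hr₀, mul_lt_rpow_iff_lt_rpow_sub_one hx]

theorem stmt_18 (r δ : ℝ) (hr : r > 1) (hδ : δ > 0) :
    ((∃ t ∈ Set.Ioc (0 : ℝ) δ, (1 / r) ^ (1 / r) * (1 + t) * (1 + δ) ^ (-(1 / r)) > 1) →
        δ > r ^ (1 / (r - 1)) - 1) ∧
    (δ > r ^ (1 / (r - 1)) - 1 →
      (∀ t ∈ Set.Ioc ((r * (1 + δ)) ^ (1 / r) - 1) δ,
          (1 / r) ^ (1 / r) * (1 + t) * (1 + δ) ^ (-(1 / r)) > 1) ∧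
      ∃ t ∈ Set.Ioc (0 : ℝ) δ, (1 / r) ^ (1 / r) * (1 + t) * (1 + δ) ^ (-(1 / r)) > 1) := by
  have hr₀ : 0 < r := one_pos.trans hr
  have hδ₁ : 0 < 1 + δ := by linarith
  have hexceeds : ∀ t : ℝ, (1 / r) ^ (1 / r) * (1 + t) * (1 + δ) ^ (-(1 / r)) > 1 ↔
      (r * (1 + δ)) ^ (1 / r) < 1 + t := fun t => by
    rw [one_div_rpow_mul_mul_rpow_neg hr₀.le hδ₁.le, gt_iff_lt, one_lt_div (by positivity)]
  have hthreshold : δ > r ^ (1 / (r - 1)) - 1 ↔ (r * (1 + δ)) ^ (1 / r) < 1 + δ := by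
    rw [gt_iff_lt, sub_lt_iff_lt_add', rpow_one_div_sub_one_lt_iff hr hδ₁]
  refine ⟨fun ⟨t, ⟨_, htδ⟩, ht⟩ => hthreshold.2 (((hexceeds t).1 ht).trans_le (by linarith)),
    fun h => ?_⟩
  have hall : ∀ t ∈ Set.Ioc ((r * (1 + δ)) ^ (1 / r) - 1) δ,
      (1 / r) ^ (1 / r) * (1 + t) * (1 + δ) ^ (-(1 / r)) > 1 :=
    fun t ht => (hexceeds t).2 (by linarith [ht.1])
  exact ⟨hall, δ, ⟨hδ, le_rfl⟩, hall δ ⟨by linarith [hthreshold.1 h], le_rfl⟩⟩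
end
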